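/- arXiv:math/0203122 — 2 statements merged into one kernel-verified Lean document; each statement's English description precedes it below -/
import Mathlib

section
/- In the formal power series ring ℚ[[x,y]], one has Σ_{i≥0} Σ_{j≥0} x^{i+1} · y^{j+1} · (1+x+y)^{-(2+i+j)} = x·y·(1+x)^{-1}·(1+y)^{-1}, where the left-hand sum converges in the (x,y)-adic topology. -/
noncomputable section

/-- The topology of coefficientwise convergence on `ℚ[[x,y]]` (the product
topology on coefficients); the `(x,y)`-adically convergent sums considered
below converge in this topology. -/
instance : TopologicalSpace (MvPowerSeries (Fin 2) ℚ) :=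
  inferInstanceAs (TopologicalSpace ((Fin 2 →₀ ℕ) → ℚ))

/-- The variable `x` in `ℚ[[x,y]]`. -/
def x : MvPowerSeries (Fin 2) ℚ := MvPowerSeries.X 0

/-- The variable `y` in `ℚ[[x,y]]`. -/
def y : MvPowerSeries (Fin 2) ℚ := MvPowerSeries.X 1

instance : T2Space (MvPowerSeries (Fin 2) ℚ) :=
  inferInstanceAs (T2Space ((Fin 2 →₀ ℕ) → ℚ))

instance : RegularSpace (MvPowerSeries (Fin 2) ℚ) :=
  inferInstanceAs (RegularSpace ((Fin 2 →₀ ℕ) → ℚ))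

instance : IsTopologicalAddGroup (MvPowerSeries (Fin 2) ℚ) :=
  inferInstanceAs (IsTopologicalAddGroup ((Fin 2 →₀ ℕ) → ℚ))

lemma myMulLeft_cont (c : MvPowerSeries (Fin 2) ℚ) :
    Continuous fun f : MvPowerSeries (Fin 2) ℚ => c * f := by
  have H : ∀ d : Fin 2 →₀ ℕ, Continuous fun f : MvPowerSeries (Fin 2) ℚ =>
      MvPowerSeries.coeff d (c * f) := by
    intro d
    simp_rw [MvPowerSeries.coeff_mul]
    refine continuous_finset_sum _ fun p _ => Continuous.mul continuous_const ?_
    exact continuous_apply p.2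
  exact continuous_pi H

lemma myHasSum_map {ι : Type*} {F : ι → MvPowerSeries (Fin 2) ℚ}
    {S : MvPowerSeries (Fin 2) ℚ} (h : HasSum F S) (c : MvPowerSeries (Fin 2) ℚ) :
    HasSum (fun n => c * F n) (c * S) :=
  h.map (AddMonoidHom.mulLeft c) (myMulLeft_cont c)

lemma myHasSum {ι : Type*} (F : ι → MvPowerSeries (Fin 2) ℚ)
    (s : (Fin 2 →₀ ℕ) → Finset ι)
    (h : ∀ d, ∀ n ∉ s d, MvPowerSeries.coeff d (F n) = 0) :
    HasSum F (fun d => ∑ n ∈ s d, MvPowerSeries.coeff d (F n)) :=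
  Pi.hasSum.mpr fun d => hasSum_sum_of_ne_finset_zero (h d)

lemma myVanish {a : ℕ} {r : MvPowerSeries (Fin 2) ℚ} (s : Fin 2)
    (h : (MvPowerSeries.X s : MvPowerSeries (Fin 2) ℚ) ^ a ∣ r) {d : Fin 2 →₀ ℕ}
    (hd : d s < a) : MvPowerSeries.coeff d r = 0 :=
  MvPowerSeries.X_pow_dvd_iff.mp h d hd

/-- In `ℚ[[x,y]]`, `1+x+y` is a unit (as are `1+x` and `1+y`), and
`Σ_{i,j≥0} x^{i+1} y^{j+1} (1+x+y)^{-(2+i+j)} = x·y·(1+x)^{-1}·(1+y)^{-1}`. -/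
theorem sum_tensored_equals_product :
    IsUnit (1 + x + y) ∧ IsUnit (1 + x) ∧ IsUnit (1 + y) ∧
      HasSum
        (fun ij : ℕ × ℕ =>
          x ^ (ij.1 + 1) * y ^ (ij.2 + 1) * Ring.inverse (1 + x + y) ^ (2 + ij.1 + ij.2))
        (x * y * Ring.inverse (1 + x) * Ring.inverse (1 + y)) := by
  have hcc : ∀ c : MvPowerSeries (Fin 2) ℚ,
      MvPowerSeries.constantCoeff (1 + c) = 1 + MvPowerSeries.constantCoeff c := by
    intro c; simp
  have hxy : IsUnit (1 + x + y) := by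
    rw [MvPowerSeries.isUnit_iff_constantCoeff]
    simp [x, y]
  have hx1 : IsUnit (1 + x) := by
    rw [MvPowerSeries.isUnit_iff_constantCoeff]; simp [x]
  have hy1 : IsUnit (1 + y) := by
    rw [MvPowerSeries.isUnit_iff_constantCoeff]; simp [y]
  refine ⟨hxy, hx1, hy1, ?_⟩
  set u : MvPowerSeries (Fin 2) ℚ := Ring.inverse (1 + x + y) with hu_def
  have hu : (1 + x + y) * u = 1 := Ring.mul_inverse_cancel _ hxy
  -- the single geometric sums
  have HA : HasSum (fun i : ℕ => (x * u) ^ (i + 1))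
      (fun d => ∑ i ∈ Finset.range (d 0), MvPowerSeries.coeff d ((x * u) ^ (i + 1))) := by
    refine myHasSum _ _ fun d i hi => myVanish 0 ?_ (Nat.lt_succ_of_le (by simpa using hi))
    exact ⟨u ^ (i + 1), by rw [x, mul_pow]⟩
  have HB : HasSum (fun j : ℕ => (y * u) ^ (j + 1))
      (fun d => ∑ j ∈ Finset.range (d 1), MvPowerSeries.coeff d ((y * u) ^ (j + 1))) := by
    refine myHasSum _ _ fun d j hj => myVanish 1 ?_ (Nat.lt_succ_of_le (by simpa using hj))
    exact ⟨u ^ (j + 1), by rw [y, mul_pow]⟩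
  set A : MvPowerSeries (Fin 2) ℚ :=
    (fun d => ∑ i ∈ Finset.range (d 0), MvPowerSeries.coeff d ((x * u) ^ (i + 1))) with hA_def
  set B : MvPowerSeries (Fin 2) ℚ :=
    (fun d => ∑ j ∈ Finset.range (d 1), MvPowerSeries.coeff d ((y * u) ^ (j + 1))) with hB_def
  have geom : ∀ (t : MvPowerSeries (Fin 2) ℚ) (C : MvPowerSeries (Fin 2) ℚ),
      HasSum (fun i : ℕ => t ^ (i + 1)) C → (1 - t) * C = t := by
    intro t C hC
    have hshift : HasSum (fun i : ℕ => t ^ (i + 1 + 1)) (C - t) := by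
      refine (hasSum_nat_add_iff (f := fun i : ℕ => t ^ (i + 1)) 1).mpr ?_
      simpa using hC
    have h1 := myHasSum_map hC (1 - t)
    have heq : (fun i : ℕ => (1 - t) * t ^ (i + 1))
        = fun i : ℕ => t ^ (i + 1) - t ^ (i + 1 + 1) := funext fun i => by ring
    rw [heq] at h1
    have h3 := h1.unique (hC.sub hshift)
    rw [h3]; ring
  have hAeq : (1 - x * u) * A = x * u := geom _ _ HA
  have hBeq : (1 - y * u) * B = y * u := geom _ _ HB
  have hA1 : (1 + y) * A = x := by
    linear_combination (1 + x + y) * hAeq + (x * A + x) * hu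
  have hB1 : (1 + x) * B = y := by
    linear_combination (1 + x + y) * hBeq + (y * B + y) * hu
  -- the double sum
  set g : ℕ × ℕ → MvPowerSeries (Fin 2) ℚ :=
    fun ij => x ^ (ij.1 + 1) * y ^ (ij.2 + 1) * u ^ (2 + ij.1 + ij.2) with hg_def
  have HG : HasSum g
      (fun d => ∑ ij ∈ Finset.range (d 0) ×ˢ Finset.range (d 1),
        MvPowerSeries.coeff d (g ij)) := by
    refine myHasSum _ _ fun d ij hij => ?_
    rw [Finset.mem_product] at hij
    push_neg at hij
    rcases Decidable.em (ij.1 ∈ Finset.range (d 0)) with h | h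
    · have hle : d 1 ≤ ij.2 := by simpa using hij h
      refine myVanish 1 (a := ij.2 + 1) ?_ (by omega)
      exact ⟨x ^ (ij.1 + 1) * u ^ (2 + ij.1 + ij.2), by rw [hg_def, y]; ring⟩
    · have hle : d 0 ≤ ij.1 := by simpa using h
      refine myVanish 0 (a := ij.1 + 1) ?_ (by omega)
      exact ⟨y ^ (ij.2 + 1) * u ^ (2 + ij.1 + ij.2), by rw [hg_def, x]; ring⟩
  set S : MvPowerSeries (Fin 2) ℚ :=
    (fun d => ∑ ij ∈ Finset.range (d 0) ×ˢ Finset.range (d 1),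
      MvPowerSeries.coeff d (g ij)) with hS_def
  have Hfib : ∀ i : ℕ, HasSum (fun j => g (i, j)) ((x * u) ^ (i + 1) * B) := by
    intro i
    have h1 := myHasSum_map HB ((x * u) ^ (i + 1))
    have heq : (fun j : ℕ => (x * u) ^ (i + 1) * (y * u) ^ (j + 1))
        = fun j : ℕ => g (i, j) := funext fun j => by rw [hg_def]; ring
    rwa [heq] at h1
  have Hrow : HasSum (fun i : ℕ => (x * u) ^ (i + 1) * B) (A * B) := by
    have h1 := myHasSum_map HA B
    have heq : (fun i : ℕ => B * (x * u) ^ (i + 1))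
        = fun i : ℕ => (x * u) ^ (i + 1) * B := funext fun i => mul_comm _ _
    rw [heq] at h1
    rwa [mul_comm B A] at h1
  have HS2 : HasSum (fun i : ℕ => (x * u) ^ (i + 1) * B) S := HG.prod_fiberwise Hfib
  have hSAB : S = A * B := HS2.unique Hrow
  have hfinal : x * y * Ring.inverse (1 + x) * Ring.inverse (1 + y) = A * B := by
    have e1 : (1 + x) * Ring.inverse (1 + x) = 1 := Ring.mul_inverse_cancel _ hx1
    have e2 : (1 + y) * Ring.inverse (1 + y) = 1 := Ring.mul_inverse_cancel _ hy1
    linear_combination (-(y * Ring.inverse (1 + x) * Ring.inverse (1 + y))) * hA1 +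
      (-((1 + y) * A * Ring.inverse (1 + x) * Ring.inverse (1 + y))) * hB1 +
      ((1 + y) * A * B * Ring.inverse (1 + y)) * e1 + (A * B) * e2
  rw [hfinal, ← hSAB]
  exact HG


end
end

section
/- Let R = ℚ[[x_1, …, x_n]] with its grading by total degree, let ℓ and m be homogeneous elements of degree 1, and for a power series A = Σ_p A_p (with A_p the homogeneous component of degree p) define T_ℓ(A) := Σ_p A_p · (1+ℓ)^{-p}. Then T_m(T_ℓ(A)) = T_{ℓ+m}(A) for every A ∈ R. -/
noncomputable section

variable {n : ℕ}

/-- The topology of coefficientwise convergence on `ℚ[[x₁,…,xₙ]]`. -/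
instance : TopologicalSpace (MvPowerSeries (Fin n) ℚ) :=
  inferInstanceAs (TopologicalSpace ((Fin n →₀ ℕ) → ℚ))

/-- The homogeneous component of total degree `p` of a power series. -/
def homogComponent (p : ℕ) (A : MvPowerSeries (Fin n) ℚ) : MvPowerSeries (Fin n) ℚ :=
  fun d => if (d.sum fun _ k => k) = p then MvPowerSeries.coeff d A else 0

/-- `A` is homogeneous of degree `p`: all coefficients away from total degree
`p` vanish. -/
def IsHomog (p : ℕ) (A : MvPowerSeries (Fin n) ℚ) : Prop :=
  ∀ d : Fin n →₀ ℕ, (d.sum fun _ k => k) ≠ p → MvPowerSeries.coeff d A = 0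

/-- Aluffi's operation `A ↦ A ⊗ L` for a line bundle with first Chern class
`ℓ`:  `T_ℓ(A) = Σ_p A_p · (1+ℓ)^{-p}`. -/
def Tens (ℓ A : MvPowerSeries (Fin n) ℚ) : MvPowerSeries (Fin n) ℚ :=
  ∑' p : ℕ, homogComponent p A * Ring.inverse (1 + ℓ) ^ p

namespace TensAux

open MvPowerSeries Finset

instance : T2Space (MvPowerSeries (Fin n) ℚ) :=
  inferInstanceAs (T2Space ((Fin n →₀ ℕ) → ℚ))

/-- total degree of a monomial -/
def deg (d : Fin n →₀ ℕ) : ℕ := d.sum fun _ k => k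

lemma deg_add (e f : Fin n →₀ ℕ) : deg (e + f) = deg e + deg f :=
  Finsupp.sum_add_index' (fun _ => rfl) (fun _ _ _ => rfl)

lemma coeff_homogComponent (p : ℕ) (A : MvPowerSeries (Fin n) ℚ) (d : Fin n →₀ ℕ) :
    MvPowerSeries.coeff d (homogComponent p A) =
      if deg d = p then MvPowerSeries.coeff d A else 0 := rfl

lemma isHomog_homogComponent (p : ℕ) (A : MvPowerSeries (Fin n) ℚ) :
    IsHomog p (homogComponent p A) := by
  intro d hd
  rw [coeff_homogComponent]
  exact if_neg hd

lemma isHomog_def {p : ℕ} {B : MvPowerSeries (Fin n) ℚ} (hB : IsHomog p B)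
    {d : Fin n →₀ ℕ} (hd : deg d ≠ p) : MvPowerSeries.coeff d B = 0 := hB d hd

lemma coeff_mul_eq_zero_of_homog {p : ℕ} {B : MvPowerSeries (Fin n) ℚ} (hB : IsHomog p B)
    (Z : MvPowerSeries (Fin n) ℚ) {d : Fin n →₀ ℕ} (hd : deg d < p) :
    MvPowerSeries.coeff d (B * Z) = 0 := by
  rw [MvPowerSeries.coeff_mul]
  refine Finset.sum_eq_zero fun x hx => ?_
  rw [Finset.HasAntidiagonal.mem_antidiagonal] at hx
  have h1 : deg x.1 + deg x.2 = deg d := by rw [← deg_add, hx]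
  rw [isHomog_def hB (by omega), zero_mul]

lemma isHomog_mul {p q : ℕ} {B Z : MvPowerSeries (Fin n) ℚ}
    (hB : IsHomog p B) (hZ : IsHomog q Z) : IsHomog (p + q) (B * Z) := by
  intro d hd
  rw [MvPowerSeries.coeff_mul]
  refine Finset.sum_eq_zero fun x hx => ?_
  rw [Finset.HasAntidiagonal.mem_antidiagonal] at hx
  have h1 : deg x.1 + deg x.2 = deg d := by rw [← deg_add, hx]
  have hd' : deg d ≠ p + q := hd
  by_cases h2 : deg x.1 = p
  · rw [isHomog_def hZ (by omega), mul_zero]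
  · rw [isHomog_def hB h2, zero_mul]

lemma homogComponent_mul_homog {p : ℕ} {B : MvPowerSeries (Fin n) ℚ} (hB : IsHomog p B)
    (Z : MvPowerSeries (Fin n) ℚ) (q : ℕ) :
    homogComponent (p + q) (B * Z) = B * homogComponent q Z := by
  ext d
  simp only [coeff_homogComponent, MvPowerSeries.coeff_mul]
  split_ifs with h
  · refine Finset.sum_congr rfl fun x hx => ?_
    rw [Finset.HasAntidiagonal.mem_antidiagonal] at hx
    have h1 : deg x.1 + deg x.2 = deg d := by rw [← deg_add, hx]
    by_cases h2 : deg x.1 = p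
    · rw [if_pos (by omega)]
    · rw [isHomog_def hB h2, zero_mul, zero_mul]
  · symm
    refine Finset.sum_eq_zero fun x hx => ?_
    rw [Finset.HasAntidiagonal.mem_antidiagonal] at hx
    have h1 : deg x.1 + deg x.2 = deg d := by rw [← deg_add, hx]
    by_cases h2 : deg x.1 = p
    · rw [if_neg (by omega), mul_zero]
    · rw [isHomog_def hB h2, zero_mul]

lemma homogComponent_mul_homog_lt {p : ℕ} {B : MvPowerSeries (Fin n) ℚ} (hB : IsHomog p B)
    (Z : MvPowerSeries (Fin n) ℚ) {q : ℕ} (hq : q < p) :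
    homogComponent q (B * Z) = 0 := by
  ext d
  rw [coeff_homogComponent]
  split_ifs with h
  · rw [coeff_mul_eq_zero_of_homog hB Z (by omega), map_zero]
  · rw [map_zero]

lemma homogComponent_add (q : ℕ) (B Z : MvPowerSeries (Fin n) ℚ) :
    homogComponent q (B + Z) = homogComponent q B + homogComponent q Z := by
  ext d
  simp only [coeff_homogComponent, map_add]
  split_ifs <;> simp

lemma deg_zero_iff {d : Fin n →₀ ℕ} : deg d = 0 ↔ d = 0 := by
  unfold deg
  rw [Finsupp.sum, Finset.sum_eq_zero_iff]
  constructor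
  · intro h
    ext i
    by_cases hi : i ∈ d.support
    · simpa using h i hi
    · simpa using Finsupp.notMem_support_iff.mp hi
  · intro h i _
    simp [h]

lemma homogComponent_one_zero : homogComponent 0 (1 : MvPowerSeries (Fin n) ℚ) = 1 := by
  ext d
  rw [coeff_homogComponent]
  by_cases h : d = 0 <;> simp [deg_zero_iff, h, MvPowerSeries.coeff_one]

lemma homogComponent_one_ne {k : ℕ} (hk : k ≠ 0) :
    homogComponent k (1 : MvPowerSeries (Fin n) ℚ) = 0 := by
  ext d
  rw [coeff_homogComponent, map_zero, MvPowerSeries.coeff_one]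
  split_ifs with h1 h2
  · exact absurd (by rw [← h1]; exact deg_zero_iff.mpr h2) hk
  · rfl
  · rfl

/-- order bound: the `k`-th term has no coefficients below total degree `k`. -/
def OB (h : ℕ → MvPowerSeries (Fin n) ℚ) : Prop :=
  ∀ k d, deg d < k → MvPowerSeries.coeff d (h k) = 0

lemma hasSum_OB {h : ℕ → MvPowerSeries (Fin n) ℚ} (hOB : OB h) :
    HasSum h (fun d => ∑ k ∈ Finset.range (deg d + 1), MvPowerSeries.coeff d (h k)) := by
  refine Pi.hasSum.mpr ?_
  intro d
  exact hasSum_sum_of_ne_finset_zero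
    (fun k hk => hOB k d (by simp only [Finset.mem_range] at hk; omega))

lemma coeff_tsum_OB {h : ℕ → MvPowerSeries (Fin n) ℚ} (hOB : OB h) (d : Fin n →₀ ℕ) :
    MvPowerSeries.coeff d (∑' k, h k) =
      ∑ k ∈ Finset.range (deg d + 1), MvPowerSeries.coeff d (h k) := by
  rw [(hasSum_OB hOB).tsum_eq]
  rfl

lemma OB_mul {h : ℕ → MvPowerSeries (Fin n) ℚ} (hOB : OB h)
    (c : MvPowerSeries (Fin n) ℚ) : OB (fun k => c * h k) := by
  intro k d hd
  rw [MvPowerSeries.coeff_mul]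
  refine Finset.sum_eq_zero fun x hx => ?_
  rw [Finset.HasAntidiagonal.mem_antidiagonal] at hx
  have h1 : deg x.1 + deg x.2 = deg d := by rw [← deg_add, hx]
  rw [hOB k x.2 (by omega), mul_zero]

lemma mul_tsum_OB {h : ℕ → MvPowerSeries (Fin n) ℚ} (hOB : OB h)
    (c : MvPowerSeries (Fin n) ℚ) :
    c * (∑' k, h k) = ∑' k, c * h k := by
  have hOB' : OB (fun k => c * h k) := OB_mul hOB c
  ext d
  rw [coeff_tsum_OB hOB' d, MvPowerSeries.coeff_mul]
  have step : ∀ x ∈ antidiagonal d,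
      MvPowerSeries.coeff x.1 c * MvPowerSeries.coeff x.2 (∑' k, h k)
      = ∑ k ∈ Finset.range (deg d + 1),
          MvPowerSeries.coeff x.1 c * MvPowerSeries.coeff x.2 (h k) := by
    intro x hx
    rw [Finset.HasAntidiagonal.mem_antidiagonal] at hx
    have h1 : deg x.1 + deg x.2 = deg d := by rw [← deg_add, hx]
    rw [coeff_tsum_OB hOB x.2, Finset.mul_sum]
    apply Finset.sum_subset (Finset.range_subset_range.mpr (by omega))
    intro k hk hk2
    rw [hOB k x.2 (by simp only [Finset.mem_range] at hk2; omega), mul_zero]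
  rw [Finset.sum_congr rfl step, Finset.sum_comm]
  exact Finset.sum_congr rfl fun k _ => (MvPowerSeries.coeff_mul _ _ _).symm

lemma triangle_sum {M : Type*} [AddCommMonoid M] (N : ℕ) (c : ℕ → ℕ → M)
    (hc : ∀ p k, N < p + k → c p k = 0) :
    ∑ q ∈ Finset.range (N+1), ∑ p ∈ Finset.range (q+1), c p (q - p)
      = ∑ p ∈ Finset.range (N+1), ∑ k ∈ Finset.range (N+1), c p k := by
  have h1 : ∀ q ∈ Finset.range (N+1), (∑ p ∈ Finset.range (q+1), c p (q-p))
      = ∑ p ∈ Finset.range (N+1), if p ≤ q then c p (q - p) else 0 := by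
    intro q hq
    rw [Finset.mem_range] at hq
    rw [← Finset.sum_subset (Finset.range_subset_range.mpr (by omega : q+1 ≤ N+1))
        (fun p _ hp => if_neg (by simp only [Finset.mem_range] at hp; omega))]
    exact Finset.sum_congr rfl fun p hp =>
      (if_pos (by simp only [Finset.mem_range] at hp; omega)).symm
  rw [Finset.sum_congr rfl h1, Finset.sum_comm]
  refine Finset.sum_congr rfl fun p hp => ?_
  rw [Finset.mem_range] at hp
  rw [← Finset.sum_filter]
  have hfil : (Finset.range (N+1)).filter (fun q => p ≤ q) = Finset.Ico p (N+1) := by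
    ext q
    simp only [Finset.mem_filter, Finset.mem_range, Finset.mem_Ico]
    omega
  rw [hfil, Finset.sum_Ico_eq_sum_range]
  have h2 : ∀ i ∈ Finset.range (N + 1 - p), c p (p + i - p) = c p i := by
    intro i _
    congr 1
    omega
  rw [Finset.sum_congr rfl h2]
  apply Finset.sum_subset (Finset.range_subset_range.mpr (by omega))
  intro k hk hk2
  simp only [Finset.mem_range] at hk hk2
  exact hc p k (by omega)

section Key

variable (ℓ m u v w : MvPowerSeries (Fin n) ℚ)

lemma OB_hc (p : ℕ) : OB (fun k => homogComponent k (u ^ p) * v ^ (p + k)) :=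
  fun k d hd => coeff_mul_eq_zero_of_homog (isHomog_homogComponent k _) _ hd

lemma key (hℓ : IsHomog 1 ℓ) (hu : (1 + ℓ) * u = 1) (hv : (1 + m) * v = 1)
    (hw : (1 + (ℓ + m)) * w = 1) (p : ℕ) :
    (∑' k, homogComponent k (u ^ p) * v ^ (p + k)) = w ^ p := by
  induction p with
  | zero =>
    ext d
    rw [coeff_tsum_OB (OB_hc u v 0) d, Finset.sum_eq_single 0]
    · simp [homogComponent_one_zero]
    · intro k _ hk
      rw [pow_zero, homogComponent_one_ne hk, zero_mul, map_zero]
    · intro h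
      exact absurd (Finset.mem_range.mpr (by omega)) h
  | succ p ih =>
    have hpow : (1 + ℓ) * u ^ (p+1) = u ^ p := by
      rw [pow_succ', ← mul_assoc, hu, one_mul]
    have hrec0 : homogComponent 0 (u ^ p) = homogComponent 0 (u ^ (p+1)) := by
      conv_lhs => rw [← hpow]
      rw [add_mul, one_mul, homogComponent_add,
        homogComponent_mul_homog_lt hℓ (u^(p+1)) (by omega : 0 < 1), add_zero]
    have hrecS : ∀ k, homogComponent (k+1) (u ^ p)
        = homogComponent (k+1) (u ^ (p+1)) + ℓ * homogComponent k (u ^ (p+1)) := by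
      intro k
      conv_lhs => rw [← hpow]
      rw [add_mul, one_mul, homogComponent_add]
      congr 1
      rw [show k + 1 = 1 + k from by omega, homogComponent_mul_homog hℓ]
    have hstep : (1 + (ℓ + m)) * (∑' k, homogComponent k (u ^ (p+1)) * v ^ ((p+1) + k))
        = ∑' k, homogComponent k (u ^ p) * v ^ (p + k) := by
      rw [mul_tsum_OB (OB_hc u v (p+1))]
      have hterm : ∀ k, (1 + (ℓ + m)) * (homogComponent k (u ^ (p+1)) * v ^ ((p+1) + k))
          = homogComponent k (u ^ (p+1)) * v ^ (p + k)
            + (ℓ * homogComponent k (u ^ (p+1))) * v ^ ((p+1) + k) := by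
        intro k
        have h1 : (1 + m) * v ^ ((p+1) + k) = v ^ (p + k) := by
          rw [show (p+1) + k = (p+k) + 1 from by omega, pow_succ', ← mul_assoc, hv, one_mul]
        linear_combination (homogComponent k (u ^ (p+1))) * h1
      rw [tsum_congr hterm]
      have hOBa : OB (fun k => homogComponent k (u ^ (p+1)) * v ^ (p + k)
          + (ℓ * homogComponent k (u ^ (p+1))) * v ^ ((p+1) + k)) := by
        intro k d hd
        rw [map_add, coeff_mul_eq_zero_of_homog (isHomog_homogComponent k _) _ hd,
          coeff_mul_eq_zero_of_homog (p := 1 + k)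
            (isHomog_mul hℓ (isHomog_homogComponent k _)) _ (by omega), add_zero]
      ext d
      rw [coeff_tsum_OB hOBa d, coeff_tsum_OB (OB_hc u v p) d]
      simp only [map_add]
      rw [Finset.sum_add_distrib, Finset.sum_range_succ', Finset.sum_range_succ'
        (fun k => MvPowerSeries.coeff d (homogComponent k (u ^ p) * v ^ (p + k)))]
      have hz : MvPowerSeries.coeff d
          ((ℓ * homogComponent (deg d) (u ^ (p+1))) * v ^ ((p+1) + deg d)) = 0 :=
        coeff_mul_eq_zero_of_homog (p := 1 + deg d)
          (isHomog_mul hℓ (isHomog_homogComponent _ _)) _ (by omega)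
      rw [Finset.sum_range_succ
        (fun k => MvPowerSeries.coeff d ((ℓ * homogComponent k (u ^ (p+1))) * v ^ ((p+1) + k))),
        hz, add_zero]
      have hterm2 : ∀ k, MvPowerSeries.coeff d (homogComponent (k+1) (u ^ p) * v ^ (p + (k+1)))
          = MvPowerSeries.coeff d (homogComponent (k+1) (u ^ (p+1)) * v ^ (p + (k+1)))
            + MvPowerSeries.coeff d ((ℓ * homogComponent k (u ^ (p+1))) * v ^ ((p+1) + k)) := by
        intro k
        rw [hrecS k, add_mul, map_add, show p + (k+1) = (p+1) + k from by omega]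
      rw [Finset.sum_congr rfl (fun k _ => hterm2 k), Finset.sum_add_distrib, hrec0]
      ring
    have hw' : w * (1 + (ℓ + m)) = 1 := by rw [mul_comm]; exact hw
    calc (∑' k, homogComponent k (u ^ (p+1)) * v ^ ((p+1) + k))
        = (w * (1 + (ℓ + m))) * (∑' k, homogComponent k (u ^ (p+1)) * v ^ ((p+1) + k)) := by
          rw [hw', one_mul]
      _ = w * ((1 + (ℓ + m)) * (∑' k, homogComponent k (u ^ (p+1)) * v ^ ((p+1) + k))) := by
          rw [mul_assoc]
      _ = w * (∑' k, homogComponent k (u ^ p) * v ^ (p + k)) := by rw [hstep]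
      _ = w * w ^ p := by rw [ih]
      _ = w ^ (p+1) := by rw [pow_succ']

end Key

lemma OB_A (A u : MvPowerSeries (Fin n) ℚ) : OB (fun p => homogComponent p A * u ^ p) :=
  fun p d hd => coeff_mul_eq_zero_of_homog (isHomog_homogComponent p A) _ hd

lemma homogComponent_Tens (ℓ A : MvPowerSeries (Fin n) ℚ) (q : ℕ) :
    homogComponent q (Tens ℓ A) = ∑ p ∈ Finset.range (q+1),
      homogComponent p A * homogComponent (q - p) (Ring.inverse (1 + ℓ) ^ p) := by
  ext d
  rw [coeff_homogComponent, map_sum]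
  split_ifs with h
  · rw [show Tens ℓ A = ∑' p, homogComponent p A * Ring.inverse (1 + ℓ) ^ p from rfl,
      coeff_tsum_OB (OB_A A _) d, h]
    refine Finset.sum_congr rfl fun p hp => ?_
    rw [Finset.mem_range] at hp
    rw [← homogComponent_mul_homog (isHomog_homogComponent p A) (Ring.inverse (1 + ℓ) ^ p) (q - p),
      show p + (q - p) = q from by omega, coeff_homogComponent, if_pos h]
  · symm
    refine Finset.sum_eq_zero fun p hp => ?_
    rw [Finset.mem_range] at hp
    exact isHomog_mul (isHomog_homogComponent p A)
      (isHomog_homogComponent (q - p) _) d (show deg d ≠ p + (q - p) from by omega)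

end TensAux

/-- Tensoring is an action: `(A ⊗ L) ⊗ M = A ⊗ (L ⊗ M)`, i.e.
`T_m(T_ℓ(A)) = T_{ℓ+m}(A)` for `ℓ, m` homogeneous of degree 1. -/
theorem tens_tens (ℓ m : MvPowerSeries (Fin n) ℚ)
    (hℓ : IsHomog 1 ℓ) (hm : IsHomog 1 m) (A : MvPowerSeries (Fin n) ℚ) :
    Tens m (Tens ℓ A) = Tens (ℓ + m) A := by
  classical
  have hunit : ∀ x : MvPowerSeries (Fin n) ℚ, IsHomog 1 x →
      (1 + x) * Ring.inverse (1 + x) = 1 := by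
    intro x hx
    apply Ring.mul_inverse_cancel
    rw [MvPowerSeries.isUnit_iff_constantCoeff]
    have h0 : MvPowerSeries.constantCoeff x = 0 := by
      have := hx 0 (by simp)
      rwa [MvPowerSeries.coeff_zero_eq_constantCoeff_apply] at this
    simp [h0]
  have hlm : IsHomog 1 (ℓ + m) := by
    intro d hd
    rw [map_add, hℓ d hd, hm d hd, add_zero]
  have hkey := TensAux.key ℓ m (Ring.inverse (1 + ℓ)) (Ring.inverse (1 + m))
    (Ring.inverse (1 + (ℓ + m))) hℓ (hunit ℓ hℓ) (hunit m hm) (hunit (ℓ + m) hlm)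
  ext d
  rw [show Tens m (Tens ℓ A)
        = ∑' q, homogComponent q (Tens ℓ A) * Ring.inverse (1 + m) ^ q from rfl,
    show Tens (ℓ + m) A
        = ∑' p, homogComponent p A * Ring.inverse (1 + (ℓ + m)) ^ p from rfl,
    TensAux.coeff_tsum_OB (TensAux.OB_A (Tens ℓ A) _) d,
    TensAux.coeff_tsum_OB (TensAux.OB_A A _) d]
  set c : ℕ → ℕ → ℚ := fun p k => MvPowerSeries.coeff d
    ((homogComponent p A * homogComponent k (Ring.inverse (1 + ℓ) ^ p))
      * Ring.inverse (1 + m) ^ (p + k)) with hc_def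
  have hc : ∀ p k, TensAux.deg d < p + k → c p k = 0 := by
    intro p k hpk
    rw [hc_def]
    exact TensAux.coeff_mul_eq_zero_of_homog
      (TensAux.isHomog_mul (TensAux.isHomog_homogComponent p A)
        (TensAux.isHomog_homogComponent k _)) _ hpk
  have hL : ∀ q ∈ Finset.range (TensAux.deg d + 1),
      MvPowerSeries.coeff d (homogComponent q (Tens ℓ A) * Ring.inverse (1 + m) ^ q)
      = ∑ p ∈ Finset.range (q+1), c p (q - p) := by
    intro q _
    rw [TensAux.homogComponent_Tens, Finset.sum_mul, map_sum]
    refine Finset.sum_congr rfl fun p hp => ?_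
    rw [Finset.mem_range] at hp
    simp only [hc_def]
    rw [show p + (q - p) = q from by omega]
  have hR : ∀ p ∈ Finset.range (TensAux.deg d + 1),
      MvPowerSeries.coeff d (homogComponent p A * Ring.inverse (1 + (ℓ + m)) ^ p)
      = ∑ k ∈ Finset.range (TensAux.deg d + 1), c p k := by
    intro p _
    rw [← hkey p, TensAux.mul_tsum_OB (TensAux.OB_hc (Ring.inverse (1 + ℓ)) (Ring.inverse (1 + m)) p),
      TensAux.coeff_tsum_OB (TensAux.OB_mul (TensAux.OB_hc _ _ p) _) d]
    refine Finset.sum_congr rfl fun k _ => ?_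
    simp only [hc_def, mul_assoc]
  rw [Finset.sum_congr rfl hL, TensAux.triangle_sum (TensAux.deg d) c hc,
    Finset.sum_congr rfl hR]

end
end
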